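/- arXiv:0802.1597 — 2 statements merged into one kernel-verified Lean document; each statement's English description precedes it below -/
import Mathlib

section
/- Let μ be a finite positive Borel measure on ℝ³, η > 0, C > 0, and A₂ = {x : μ(B(x,r)) ≥ η r / (−C log(r²)) for all 0 < r < min(1, dist(x, ∂Ω))}. Then the Hausdorff dimension of A₂ is at most 1. -/
/-!
Near a point of `A₂`, `μ(B(x, r)) ≳ r / log (1 / r)`, and since `r ^ ε log (1 / r)` is bounded
this dominates `r ^ (1 + ε)` for every `ε > 0`. A Vitali family of disjoint balls `B(x, r)`
centred in the set then has `O(r ^ -(1 + ε))` members while their enlargements `B(x, 4r)`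
cover the set, so `H^{1 + ε}(A₂) < ∞`. The admissible scales depend on the distance to `∂Ω`,
so this is done on the countably many pieces where that distance is bounded below.
-/

open Real Metric MeasureTheory ENNReal NNReal Set Filter Topology

lemma Real.rpow_one_add_le_div_neg_log {e r : ℝ} (he : 0 < e) (hr₀ : 0 < r) (hr₁ : r < 1) :
    r ^ (1 + e) ≤ r / (e * -log r) := by
  have hlog : 0 < -log r := neg_pos.2 (log_neg hr₀ hr₁)
  have hre : 0 < r ^ e := rpow_pos_of_pos hr₀ e
  have hlog_le : -log r ≤ (r ^ e)⁻¹ / e := by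
    simpa [log_inv, inv_rpow hr₀.le] using log_le_rpow_div (inv_nonneg.2 hr₀.le) he
  rw [le_div_iff₀ (by positivity), rpow_add hr₀, rpow_one]
  calc r * r ^ e * (e * -log r) = r * e * (r ^ e * -log r) := by ring
    _ ≤ r * e * (r ^ e * ((r ^ e)⁻¹ / e)) := by gcongr
    _ = r := by field_simp

lemma Real.rpow_one_add_le_mul_div_neg_mul_log_sq {η C e r : ℝ} (hη : 0 < η) (hC : 0 < C)
    (he : 0 < e) (hr₀ : 0 < r) (hr₁ : r < 1) :
    r ^ (1 + e) ≤ 2 * C / (η * e) * (η * r / (-C * log (r ^ 2))) := by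
  refine (rpow_one_add_le_div_neg_log he hr₀ hr₁).trans_eq ?_
  have := (log_neg hr₀ hr₁).ne
  have := hη.ne'
  have := hC.ne'
  have := he.ne'
  rw [log_pow]
  field_simp
  ring

section Covering

variable {X : Type*} [MetricSpace X]

theorem ediam_closedBall_le_ofReal (x : X) {r : ℝ} (hr : 0 ≤ r) :
    ediam (closedBall x r) ≤ ENNReal.ofReal (2 * r) := by
  rw [← closedEBall_ofReal hr, ENNReal.ofReal_mul zero_le_two, ofReal_ofNat]
  exact ediam_closedEBall_le

variable [MeasurableSpace X]

theorem exists_countable_pairwiseDisjoint_ball_cover [OpensMeasurableSpace X]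
    (μ : Measure X) [SFinite μ] (s : Set X) (r : ℝ) (hμ : ∀ x ∈ s, μ (ball x r) ≠ 0) :
    ∃ u ⊆ s, u.Countable ∧ u.PairwiseDisjoint (ball · r) ∧
      s ⊆ ⋃ x ∈ u, closedBall x (4 * r) := by
  obtain ⟨u, hus, hdisj, hcov⟩ :=
    Vitali.exists_disjoint_subfamily_covering_enlargement_closedBall s id (fun _ => r) r
      (fun _ _ => le_rfl) 4 (by norm_num)
  have hdisj' : u.PairwiseDisjoint (ball · r) := hdisj.mono fun _ => ball_subset_closedBall
  refine ⟨u, hus, ?_, hdisj', fun x hx => ?_⟩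
  · have hpos := Measure.countable_meas_pos_of_disjoint_iUnion (μ := μ)
      (fun _ => measurableSet_ball) (hdisj'.subtype _ _)
    have huniv : {x : u | 0 < μ (ball (x : X) r)} = univ :=
      eq_univ_of_forall fun x => pos_iff_ne_zero.2 (hμ x (hus x.2))
    rw [huniv, countable_univ_iff] at hpos
    exact countable_coe_iff.1 hpos
  · obtain ⟨y, hyu, hxy⟩ := hcov x hx
    have hr : 0 ≤ r := (nonempty_ball.1 (nonempty_of_measure_ne_zero (hμ x hx))).le
    exact mem_biUnion hyu (hxy (mem_closedBall_self hr))

theorem tsum_ediam_closedBall_rpow_le [OpensMeasurableSpace X] (μ : Measure X) {u : Set X}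
    (hu : u.Countable) {r d : ℝ} (hr : 0 ≤ r) (hd : 0 ≤ d)
    (hdisj : u.PairwiseDisjoint (ball · r)) {K : ℝ≥0∞}
    (h : ∀ x ∈ u, ENNReal.ofReal r ^ d ≤ K * μ (ball x r)) :
    ∑' x : u, ediam (closedBall (x : X) (4 * r)) ^ d ≤ 8 ^ d * K * μ univ := by
  have := hu.to_subtype
  calc ∑' x : u, ediam (closedBall (x : X) (4 * r)) ^ d
      ≤ ∑' x : u, 8 ^ d * (K * μ (ball (x : X) r)) := by
        gcongr with x
        calc ediam (closedBall (x : X) (4 * r)) ^ d ≤ ENNReal.ofReal (2 * (4 * r)) ^ d := by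
              gcongr; exact ediam_closedBall_le_ofReal _ (by positivity)
          _ = 8 ^ d * ENNReal.ofReal r ^ d := by
              rw [← mul_assoc, ofReal_mul (by norm_num), mul_rpow_of_nonneg _ _ hd]; norm_num
          _ ≤ 8 ^ d * (K * μ (ball (x : X) r)) := by gcongr; exact h x x.2
    _ = 8 ^ d * K * μ (⋃ x : u, ball (x : X) r) := by
        rw [ENNReal.tsum_mul_left, ENNReal.tsum_mul_left, mul_assoc,
          measure_iUnion (hdisj.subtype _ _) fun _ => measurableSet_ball]
    _ ≤ 8 ^ d * K * μ univ := by gcongr; exact subset_univ _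

theorem hausdorffMeasure_le_of_rpow_le_measure_ball [BorelSpace X] (μ : Measure X)
    [IsFiniteMeasure μ] {s : Set X} {d : ℝ} (hd : 0 ≤ d) {K : ℝ≥0∞} {δ : ℝ} (hδ : 0 < δ)
    (h : ∀ r ∈ Ioc 0 δ, ∀ x ∈ s, ENNReal.ofReal r ^ d ≤ K * μ (ball x r)) :
    μH[d] s ≤ 8 ^ d * K * μ univ := by
  set ρ : ℕ → ℝ := fun n => δ * (1 / (n + 1))
  have hρ : ∀ n, ρ n ∈ Ioc 0 δ := fun n =>
    ⟨by positivity, mul_le_of_le_one_right hδ.le (div_le_one_of_le₀ (by simp) (by positivity))⟩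
  have hμ : ∀ n, ∀ x ∈ s, μ (ball x (ρ n)) ≠ 0 := fun n x hx h0 => by
    have hle := h _ (hρ n) x hx
    rw [h0, mul_zero, nonpos_iff_eq_zero] at hle
    exact (ENNReal.rpow_pos (ofReal_pos.2 (hρ n).1) ofReal_ne_top).ne' hle
  choose u hus hcount hdisj hcov using
    fun n => exists_countable_pairwiseDisjoint_ball_cover μ s (ρ n) (hμ n)
  have := fun n => (hcount n).to_subtype
  have hdiam : ∀ n (x : u n),
      ediam (closedBall (x : X) (4 * ρ n)) ≤ ENNReal.ofReal (8 * ρ n) := fun n x =>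
    (ediam_closedBall_le_ofReal _ (by linarith [(hρ n).1])).trans_eq (by ring_nf)
  have hρ_lim : Tendsto (fun n => ENNReal.ofReal (8 * ρ n)) atTop (𝓝 0) := by
    rw [← ofReal_zero]
    refine ENNReal.tendsto_ofReal ?_
    simpa [ρ] using (tendsto_one_div_add_atTop_nhds_zero_nat.const_mul δ).const_mul (8 : ℝ)
  calc μH[d] s
        ≤ liminf (fun n => ∑' x : u n, ediam (closedBall (x : X) (4 * ρ n)) ^ d) atTop :=
        Measure.hausdorffMeasure_le_liminf_tsum d s _ hρ_lim _ (Eventually.of_forall hdiam)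
          (Eventually.of_forall fun n => by simpa only [iUnion_coe_set] using hcov n)
    _ ≤ 8 ^ d * K * μ univ := liminf_le_of_frequently_le <| Frequently.of_forall fun n =>
        tsum_ediam_closedBall_rpow_le μ (hcount n) (hρ n).1.le hd (hdisj n)
          fun x hx => h _ (hρ n) x (hus n hx)

theorem dimH_le_of_rpow_le_measure_ball [BorelSpace X] (μ : Measure X) [IsFiniteMeasure μ]
    {s : Set X} {d : ℝ≥0} {K : ℝ≥0∞} (hK : K ≠ ∞)
    (h : ∀ x ∈ s, ∀ᶠ r in 𝓝[>] 0, ENNReal.ofReal r ^ (d : ℝ) ≤ K * μ (ball x r)) :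
    dimH s ≤ d := by
  set S : ℕ → Set X := fun n => {x ∈ s | ∀ r ∈ Ioc 0 (1 / (n + 1 : ℝ)),
    ENNReal.ofReal r ^ (d : ℝ) ≤ K * μ (ball x r)}
  have hs : s ⊆ ⋃ n, S n := fun x hx => by
    obtain ⟨ε, hε, hεs⟩ := mem_nhdsGT_iff_exists_Ioc_subset.1 (h x hx)
    obtain ⟨n, hn⟩ := exists_nat_one_div_lt (mem_Ioi.1 hε)
    exact mem_iUnion.2 ⟨n, hx, fun r hr => hεs ⟨hr.1, hr.2.trans hn.le⟩⟩
  have hS : ∀ n, dimH (S n) ≤ d := fun n =>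
    dimH_le_of_hausdorffMeasure_ne_top <| ne_top_of_le_ne_top (by finiteness) <|
      hausdorffMeasure_le_of_rpow_le_measure_ball μ d.coe_nonneg (by positivity)
        fun r hr x hx => hx.2 r hr
  calc dimH s ≤ dimH (⋃ n, S n) := dimH_mono hs
    _ = ⨆ n, dimH (S n) := dimH_iUnion S
    _ ≤ d := iSup_le hS

end Covering

theorem stmt12 (Ω : Set (EuclideanSpace ℝ (Fin 3))) (hΩ : IsOpen Ω)
    (μ : Measure (EuclideanSpace ℝ (Fin 3))) [IsFiniteMeasure μ]
    (η C : ℝ) (hη : 0 < η) (hC : 0 < C)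
    (A₂ : Set (EuclideanSpace ℝ (Fin 3)))
    (hA₂ : A₂ = {x | x ∈ Ω ∧ ∀ r : ℝ, 0 < r →
      ENNReal.ofReal r < min 1 (EMetric.infEdist x Ωᶜ) →
      η * r / (-C * Real.log (r ^ 2)) ≤ (μ (ball x r)).toReal}) :
    dimH A₂ ≤ 1 := by
  subst hA₂
  refine ENNReal.le_of_forall_pos_le_add fun ε hε _ => ?_
  set K := ENNReal.ofReal (2 * C / (η * ε))
  refine (dimH_le_of_rpow_le_measure_ball μ (d := 1 + ε) (K := K) ofReal_ne_top ?_).trans_eq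
    (by push_cast; rfl)
  rintro x ⟨hxΩ, hx⟩
  have hx₀ : 0 < min 1 (EMetric.infEdist x Ωᶜ) :=
    lt_min one_pos <| Metric.infEDist_pos_iff_notMem_closure.2 <| by
      rwa [hΩ.isClosed_compl.closure_eq, notMem_compl_iff]
  have hsmall : ∀ᶠ r in 𝓝[>] (0 : ℝ), ENNReal.ofReal r < min 1 (EMetric.infEdist x Ωᶜ) :=
    nhdsWithin_le_nhds <| (ENNReal.tendsto_ofReal tendsto_id).eventually_lt_const
      (by rwa [ofReal_zero])
  filter_upwards [self_mem_nhdsWithin, hsmall] with r (hr : 0 < r) hrx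
  have hr₁ : r < 1 := ofReal_lt_one.1 (hrx.trans_le (min_le_left _ _))
  calc ENNReal.ofReal r ^ ((1 + ε : ℝ≥0) : ℝ) = ENNReal.ofReal (r ^ (1 + (ε : ℝ))) := by
        rw [ofReal_rpow_of_pos hr]; push_cast; rfl
    _ ≤ ENNReal.ofReal (2 * C / (η * ε) * (η * r / (-C * Real.log (r ^ 2)))) :=
        ofReal_le_ofReal <|
          rpow_one_add_le_mul_div_neg_mul_log_sq hη hC (NNReal.coe_pos.2 hε) hr hr₁
    _ = K * ENNReal.ofReal (η * r / (-C * Real.log (r ^ 2))) := ofReal_mul (by positivity)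
    _ ≤ K * μ (ball x r) := by gcongr; exact ofReal_le_of_le_toReal (hx r hr hrx)
end

section
/- Suppose a nonnegative sequence (a_j) satisfies a_{j+1} ≤ γ a_j + C a_j (a_j + a_j u₀ + K a_j Σ_{k=0}^j a_k) for all j ≥ 0, where 0 < γ < 1, C, K, u₀ ≥ 0. Then there exist η > 0 and β̄ ∈ (γ, 1) such that a₀ ≤ η implies a_j ≤ a₀ β̄^j for all j ≥ 0. -/
open Finset

/-
Take β = (1 + γ)/2. As long as a_k ≤ a₀ β^k for k ≤ j, we have a_j ≤ a₀ and
Σ_{k ≤ j} a_k ≤ a₀/(1 - β), so for a₀ ≤ 1 the nonlinear term is at most M a₀ · a_j with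
M = C(1 + u₀ + K/(1 - β)). Choosing a₀ ≤ η small enough that M a₀ ≤ β - γ turns the recursion
into a_{j+1} ≤ β a_j, which closes a strong induction.
-/

lemma le_geometric_of_step {a : ℕ → ℝ} {c β : ℝ} (h0 : a 0 ≤ c)
    (hstep : ∀ j, (∀ k ≤ j, a k ≤ c * β ^ k) → a (j + 1) ≤ c * β ^ (j + 1)) :
    ∀ j, a j ≤ c * β ^ j := by
  intro j
  induction j using Nat.strong_induction_on with
  | _ j ih =>
    cases j with
    | zero => simpa using h0
    | succ j => exact hstep j fun k hk => ih k (Nat.lt_succ_of_le hk)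

lemma sum_range_le_of_le_geometric {a : ℕ → ℝ} {c β : ℝ} (hc : 0 ≤ c) (hβ0 : 0 ≤ β)
    (hβ1 : β < 1) {n : ℕ} (h : ∀ k < n, a k ≤ c * β ^ k) :
    ∑ k ∈ range n, a k ≤ c * (1 - β)⁻¹ :=
  calc ∑ k ∈ range n, a k ≤ ∑ k ∈ range n, c * β ^ k :=
        sum_le_sum fun k hk => h k (mem_range.mp hk)
    _ = c * ∑ k ∈ range n, β ^ k := (mul_sum _ _ _).symm
    _ ≤ c * (1 - β)⁻¹ := by
        gcongr
        simpa [← range_eq_Ico] using geom_sum_Ico_le_of_lt_one (m := 0) (n := n) hβ0 hβ1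

lemma perturbation_le {C K u₀ L x c s : ℝ} (hC : 0 ≤ C) (hK : 0 ≤ K) (hu₀ : 0 ≤ u₀)
    (hL : 0 ≤ L) (hx : 0 ≤ x) (hxc : x ≤ c) (hc1 : c ≤ 1) (hs : s ≤ c * L) :
    C * x * (x + x * u₀ + K * x * s) ≤ C * (1 + u₀ + K * L) * c * x := by
  have hc0 : 0 ≤ c := hx.trans hxc
  have hxs : x * s ≤ c * L :=
    calc x * s ≤ x * (c * L) := mul_le_mul_of_nonneg_left hs hx
      _ ≤ c * (c * L) := mul_le_mul_of_nonneg_right hxc (by positivity)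
      _ ≤ 1 * (c * L) := mul_le_mul_of_nonneg_right hc1 (by positivity)
      _ = c * L := one_mul _
  have hinner : x + x * u₀ + K * x * s ≤ c * (1 + u₀ + K * L) := by
    nlinarith [mul_le_mul_of_nonneg_left hxs hK, mul_le_mul_of_nonneg_right hxc hu₀]
  calc C * x * (x + x * u₀ + K * x * s) ≤ C * x * (c * (1 + u₀ + K * L)) :=
        mul_le_mul_of_nonneg_left hinner (mul_nonneg hC hx)
    _ = C * (1 + u₀ + K * L) * c * x := by ring

theorem stmt19 (γ C K u₀ : ℝ) (hγ : 0 < γ) (hγ1 : γ < 1)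
    (hC : 0 ≤ C) (hK : 0 ≤ K) (hu₀ : 0 ≤ u₀) :
    ∃ η > (0 : ℝ), ∃ β : ℝ, β ∈ Set.Ioo γ 1 ∧
      ∀ a : ℕ → ℝ, (∀ j, 0 ≤ a j) →
        (∀ j, a (j + 1) ≤ γ * a j +
          C * a j * (a j + a j * u₀ + K * a j * ∑ k ∈ Finset.range (j + 1), a k)) →
        a 0 ≤ η → ∀ j, a j ≤ a 0 * β ^ j := by
  set β := (1 + γ) / 2 with hβ
  have hβ0 : 0 < β := by positivity
  have hβ1 : β < 1 := by linarith
  have hγβ : 0 < β - γ := by linarith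
  set L := (1 - β)⁻¹
  have hL : 0 ≤ L := inv_nonneg.mpr (by linarith)
  set M := C * (1 + u₀ + K * L)
  have hM : 0 ≤ M := by positivity
  refine ⟨min 1 ((β - γ) / (M + 1)), lt_min one_pos (by positivity), β,
    ⟨by linarith, hβ1⟩, fun a ha hrec ha0 => le_geometric_of_step le_rfl fun j hj => ?_⟩
  have hMa : M * a 0 ≤ β - γ := by
    have := (le_div_iff₀ (by linarith)).mp (ha0.trans (min_le_right _ _))
    linarith [ha 0]
  have haj1 : a j ≤ a 0 :=
    (hj j le_rfl).trans (mul_le_of_le_one_right (ha 0) (pow_le_one₀ hβ0.le hβ1.le))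
  have hsum : ∑ k ∈ range (j + 1), a k ≤ a 0 * L :=
    sum_range_le_of_le_geometric (ha 0) hβ0.le hβ1 fun k hk => hj k (Nat.lt_succ_iff.mp hk)
  have hpert := perturbation_le hC hK hu₀ hL (ha j) haj1 (ha0.trans (min_le_left _ _)) hsum
  calc a (j + 1) ≤ γ * a j + M * a 0 * a j := (hrec j).trans (by linarith)
    _ ≤ γ * a j + (β - γ) * a j := by
        linarith [mul_le_mul_of_nonneg_right hMa (ha j)]
    _ = β * a j := by ring
    _ ≤ β * (a 0 * β ^ j) := mul_le_mul_of_nonneg_left (hj j le_rfl) hβ0.le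
    _ = a 0 * β ^ (j + 1) := by ring
end
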